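/- Let ψ : [0,1] → ℝ be measurable with K(x,y) := ψ(|x−y|) integrable on [0,1]². Suppose f_n, f ∈ L²([0,1]) with 0 ≤ f_n ≤ 1 and 0 ≤ f ≤ 1 a.e., and f_n → f weakly in L². Then ∫∫ f_n(x) f_n(y) K(x,y) dx dy → ∫∫ f(x) f(y) K(x,y) dx dy. -/

import Mathlib

/-!
The energy `∫∫ u(x) w(y) K(x,y)` is Lipschitz in `K ∈ L¹` with constant `C²`, uniformly over all
`u, w` bounded by `C`, so the set of kernels for which the energies converge is closed in `L¹`.
For the indicator of a rectangle `s × t` the energy factorises as `(∫_s u)(∫_t w)`, which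
converges by weak convergence. A π-λ argument (complements directly, disjoint unions by
dominated convergence for series) extends this to indicators of all measurable subsets of the
product, and closedness in `L¹` then to all integrable kernels.
-/

open MeasureTheory Filter Set
open scoped Topology NNReal

namespace MeasureTheory

variable {α β ι : Type*} [MeasurableSpace α] [MeasurableSpace β] {μ : Measure α} {ν : Measure β}
  {u : α → ℝ} {w : β → ℝ} {C : ℝ≥0}

/-- For `u = w` and `μ = ν` this is the quadratic energy `∫∫ u(x) u(y) K(x,y)`. -/
noncomputable def kernelEnergy (μ : Measure α) (ν : Measure β) (u : α → ℝ) (w : β → ℝ)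
    (K : α × β → ℝ) : ℝ :=
  ∫ p, u p.1 * w p.2 * K p ∂μ.prod ν

lemma kernelEnergy_congr_ae {K L : α × β → ℝ}
    (hKL : K =ᵐ[μ.prod ν] L) : kernelEnergy μ ν u w K = kernelEnergy μ ν u w L :=
  integral_congr_ae (hKL.mono fun p hp => by simp only [hp])

lemma kernelEnergy_indicator {S : Set (α × β)} (hS : MeasurableSet S) (c : ℝ) :
    kernelEnergy μ ν u w (S.indicator fun _ => c) = c * ∫ p in S, u p.1 * w p.2 ∂μ.prod ν := by
  have hpoint : (fun p : α × β => u p.1 * w p.2 * S.indicator (fun _ => c) p) =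
      S.indicator fun p => c * (u p.1 * w p.2) := by
    ext p
    by_cases hp : p ∈ S <;> simp [hp, mul_comm]
  rw [kernelEnergy, hpoint, integral_indicator hS, integral_const_mul]

lemma ae_norm_mul_prod_le (hu : ∀ᵐ x ∂μ, ‖u x‖ ≤ C) (hw : ∀ᵐ y ∂ν, ‖w y‖ ≤ C) :
    ∀ᵐ p ∂μ.prod ν, ‖u p.1 * w p.2‖ ≤ C * C := by
  filter_upwards [Measure.quasiMeasurePreserving_fst.ae hu,
    Measure.quasiMeasurePreserving_snd.ae hw] with p hup hwp
  rw [norm_mul]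
  exact mul_le_mul hup hwp (norm_nonneg _) C.coe_nonneg

lemma integrable_mul_prod [IsFiniteMeasure μ] [IsFiniteMeasure ν]
    (hu_meas : AEStronglyMeasurable u μ) (hw_meas : AEStronglyMeasurable w ν)
    (hu : ∀ᵐ x ∂μ, ‖u x‖ ≤ C) (hw : ∀ᵐ y ∂ν, ‖w y‖ ≤ C) :
    Integrable (fun p : α × β => u p.1 * w p.2) (μ.prod ν) :=
  (integrable_const ((C : ℝ) * C)).mono' (hu_meas.comp_fst.mul hw_meas.comp_snd)
    (ae_norm_mul_prod_le hu hw)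

lemma integrable_mul_prod_mul
    (hu_meas : AEStronglyMeasurable u μ) (hw_meas : AEStronglyMeasurable w ν)
    (hu : ∀ᵐ x ∂μ, ‖u x‖ ≤ C) (hw : ∀ᵐ y ∂ν, ‖w y‖ ≤ C)
    {K : α × β → ℝ} (hK : Integrable K (μ.prod ν)) :
    Integrable (fun p => u p.1 * w p.2 * K p) (μ.prod ν) :=
  hK.bdd_mul (hu_meas.comp_fst.mul hw_meas.comp_snd) (ae_norm_mul_prod_le hu hw)

lemma kernelEnergy_add
    (hu_meas : AEStronglyMeasurable u μ) (hw_meas : AEStronglyMeasurable w ν)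
    (hu : ∀ᵐ x ∂μ, ‖u x‖ ≤ C) (hw : ∀ᵐ y ∂ν, ‖w y‖ ≤ C)
    {K L : α × β → ℝ} (hK : Integrable K (μ.prod ν)) (hL : Integrable L (μ.prod ν)) :
    kernelEnergy μ ν u w (K + L) = kernelEnergy μ ν u w K + kernelEnergy μ ν u w L := by
  simp only [kernelEnergy, Pi.add_apply, mul_add]
  exact integral_add (integrable_mul_prod_mul hu_meas hw_meas hu hw hK)
    (integrable_mul_prod_mul hu_meas hw_meas hu hw hL)

lemma kernelEnergy_sub
    (hu_meas : AEStronglyMeasurable u μ) (hw_meas : AEStronglyMeasurable w ν)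
    (hu : ∀ᵐ x ∂μ, ‖u x‖ ≤ C) (hw : ∀ᵐ y ∂ν, ‖w y‖ ≤ C)
    {K L : α × β → ℝ} (hK : Integrable K (μ.prod ν)) (hL : Integrable L (μ.prod ν)) :
    kernelEnergy μ ν u w (K - L) = kernelEnergy μ ν u w K - kernelEnergy μ ν u w L := by
  simp only [kernelEnergy, Pi.sub_apply, mul_sub]
  exact integral_sub (integrable_mul_prod_mul hu_meas hw_meas hu hw hK)
    (integrable_mul_prod_mul hu_meas hw_meas hu hw hL)

lemma norm_kernelEnergy_le (hu : ∀ᵐ x ∂μ, ‖u x‖ ≤ C) (hw : ∀ᵐ y ∂ν, ‖w y‖ ≤ C)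
    {K : α × β → ℝ} (hK : Integrable K (μ.prod ν)) :
    ‖kernelEnergy μ ν u w K‖ ≤ C * C * ∫ p, ‖K p‖ ∂μ.prod ν := by
  rw [← integral_const_mul]
  refine norm_integral_le_of_norm_le (hK.norm.const_mul _) ?_
  filter_upwards [ae_norm_mul_prod_le hu hw] with p hp
  rw [norm_mul]
  exact mul_le_mul_of_nonneg_right hp (norm_nonneg _)

lemma lipschitzWith_kernelEnergy
    (hu_meas : AEStronglyMeasurable u μ) (hw_meas : AEStronglyMeasurable w ν)
    (hu : ∀ᵐ x ∂μ, ‖u x‖ ≤ C) (hw : ∀ᵐ y ∂ν, ‖w y‖ ≤ C) :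
    LipschitzWith (C * C) fun K : α × β →₁[μ.prod ν] ℝ => kernelEnergy μ ν u w K := by
  refine LipschitzWith.of_dist_le_mul fun K L => ?_
  have hsub : kernelEnergy μ ν u w ⇑(K - L) =
      kernelEnergy μ ν u w K - kernelEnergy μ ν u w L := by
    rw [kernelEnergy_congr_ae (Lp.coeFn_sub K L),
      kernelEnergy_sub hu_meas hw_meas hu hw (L1.integrable_coeFn K) (L1.integrable_coeFn L)]
  rw [dist_eq_norm, dist_eq_norm, ← hsub, L1.norm_eq_integral_norm]
  push_cast
  exact norm_kernelEnergy_le hu hw (L1.integrable_coeFn (K - L))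

structure BoundedSetwiseTendsto (μ : Measure α) (C : ℝ≥0) (u : ι → α → ℝ) (l : Filter ι)
    (u₀ : α → ℝ) : Prop where
  aestronglyMeasurable : ∀ i, AEStronglyMeasurable (u i) μ
  aestronglyMeasurable_lim : AEStronglyMeasurable u₀ μ
  norm_le : ∀ i, ∀ᵐ x ∂μ, ‖u i x‖ ≤ C
  norm_lim_le : ∀ᵐ x ∂μ, ‖u₀ x‖ ≤ C
  tendsto_setIntegral : ∀ s, MeasurableSet s →
    Tendsto (fun i => ∫ x in s, u i x ∂μ) l (𝓝 (∫ x in s, u₀ x ∂μ))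

namespace BoundedSetwiseTendsto

variable {l : Filter ι} {u : ι → α → ℝ} {u₀ : α → ℝ} {w : ι → β → ℝ} {w₀ : β → ℝ}

theorem tendsto_setIntegral_mul_prod [IsFiniteMeasure μ] [IsFiniteMeasure ν]
    (hu : BoundedSetwiseTendsto μ C u l u₀)
    (hw : BoundedSetwiseTendsto ν C w l w₀) {S : Set (α × β)} (hS : MeasurableSet S) :
    Tendsto (fun i => ∫ p in S, u i p.1 * w i p.2 ∂μ.prod ν) l
      (𝓝 (∫ p in S, u₀ p.1 * w₀ p.2 ∂μ.prod ν)) := by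
  have hint := integrable_mul_prod hu.aestronglyMeasurable_lim hw.aestronglyMeasurable_lim
    hu.norm_lim_le hw.norm_lim_le
  have hint_i i := integrable_mul_prod (hu.aestronglyMeasurable i) (hw.aestronglyMeasurable i)
    (hu.norm_le i) (hw.norm_le i)
  induction S, hS using MeasurableSpace.induction_on_inter generateFrom_prod.symm
    isPiSystem_prod with
  | empty => simpa using tendsto_const_nhds
  | basic S hS =>
    obtain ⟨s, hs, t, ht, rfl⟩ := hS
    simp_rw [setIntegral_prod_mul]
    exact (hu.tendsto_setIntegral s hs).mul (hw.tendsto_setIntegral t ht)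
  | compl S hS ih =>
    have huniv : Tendsto (fun i => ∫ p, u i p.1 * w i p.2 ∂μ.prod ν) l
        (𝓝 (∫ p, u₀ p.1 * w₀ p.2 ∂μ.prod ν)) := by
      simpa only [integral_prod_mul, Measure.restrict_univ] using
        (hu.tendsto_setIntegral _ .univ).mul (hw.tendsto_setIntegral _ .univ)
    simp_rw [setIntegral_compl hS (hint_i _), setIntegral_compl hS hint]
    exact huniv.sub ih
  | iUnion S hdisj hS ih =>
    simp_rw [integral_iUnion hS hdisj (hint_i _).integrableOn,
      integral_iUnion hS hdisj hint.integrableOn]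
    refine tendsto_tsum_of_dominated_convergence
      (bound := fun k => C * C * (μ.prod ν).real (S k)) ?_ ih (.of_forall fun i k => ?_)
    · refine (ENNReal.summable_toReal ?_).mul_left _
      rw [← measure_iUnion hdisj hS]
      exact measure_ne_top _ _
    · exact norm_setIntegral_le_of_norm_le_const_ae (measure_lt_top _ _)
        (ae_restrict_of_ae (ae_norm_mul_prod_le (hu.norm_le i) (hw.norm_le i)))

theorem isClosed_setOf_tendsto_kernelEnergy (hu : BoundedSetwiseTendsto μ C u l u₀)
    (hw : BoundedSetwiseTendsto ν C w l w₀) :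
    IsClosed {K : α × β →₁[μ.prod ν] ℝ |
      Tendsto (fun i => kernelEnergy μ ν (u i) (w i) K) l (𝓝 (kernelEnergy μ ν u₀ w₀ K))} :=
  (LipschitzWith.uniformEquicontinuous _ _ fun i =>
      lipschitzWith_kernelEnergy (hu.aestronglyMeasurable i) (hw.aestronglyMeasurable i)
        (hu.norm_le i) (hw.norm_le i)).equicontinuous.isClosed_setOfPred_tendsto
    (lipschitzWith_kernelEnergy hu.aestronglyMeasurable_lim hw.aestronglyMeasurable_lim
      hu.norm_lim_le hw.norm_lim_le).continuous

theorem tendsto_kernelEnergy [IsFiniteMeasure μ] [IsFiniteMeasure ν]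
    (hu : BoundedSetwiseTendsto μ C u l u₀)
    (hw : BoundedSetwiseTendsto ν C w l w₀) {K : α × β → ℝ} (hK : Integrable K (μ.prod ν)) :
    Tendsto (fun i => kernelEnergy μ ν (u i) (w i) K) l (𝓝 (kernelEnergy μ ν u₀ w₀ K)) := by
  refine Integrable.induction (P := fun K =>
      Tendsto (fun i => kernelEnergy μ ν (u i) (w i) K) l (𝓝 (kernelEnergy μ ν u₀ w₀ K)))
    ?_ ?_ ?_ ?_ hK
  · intro c S hS _
    simp_rw [kernelEnergy_indicator hS]
    exact (hu.tendsto_setIntegral_mul_prod hw hS).const_mul c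
  · intro K L _ hK hL ihK ihL
    rw [kernelEnergy_add hu.aestronglyMeasurable_lim hw.aestronglyMeasurable_lim
      hu.norm_lim_le hw.norm_lim_le hK hL]
    refine (ihK.add ihL).congr fun i => ?_
    rw [kernelEnergy_add (hu.aestronglyMeasurable i) (hw.aestronglyMeasurable i)
      (hu.norm_le i) (hw.norm_le i) hK hL]
  · exact hu.isClosed_setOf_tendsto_kernelEnergy hw
  · intro K L hKL _ ih
    simpa only [kernelEnergy_congr_ae hKL] using ih

end BoundedSetwiseTendsto

end MeasureTheory

theorem stmt_7_general (ψ : ℝ → ℝ)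
    (hK : Integrable (fun p : ℝ × ℝ => ψ (|p.1 - p.2|))
      (((volume : Measure ℝ).restrict (Set.Icc (0:ℝ) 1)).prod
        ((volume : Measure ℝ).restrict (Set.Icc (0:ℝ) 1))))
    (f : ℕ → ℝ → ℝ) (flim : ℝ → ℝ)
    (hfmeas : ∀ n, Measurable (f n)) (hflimmeas : Measurable flim)
    (hfbd : ∀ n, ∀ᵐ x ∂((volume : Measure ℝ).restrict (Set.Icc (0:ℝ) 1)),
      f n x ∈ Set.Icc (0:ℝ) 1)
    (hflimbd : ∀ᵐ x ∂((volume : Measure ℝ).restrict (Set.Icc (0:ℝ) 1)),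
      flim x ∈ Set.Icc (0:ℝ) 1)
    (hweak : ∀ g : ℝ → ℝ,
      MemLp g 2 ((volume : Measure ℝ).restrict (Set.Icc (0:ℝ) 1)) →
      Filter.Tendsto (fun n => ∫ x in Set.Icc (0:ℝ) 1, f n x * g x)
        Filter.atTop (nhds (∫ x in Set.Icc (0:ℝ) 1, flim x * g x))) :
    Filter.Tendsto
      (fun n => ∫ x in Set.Icc (0:ℝ) 1, ∫ y in Set.Icc (0:ℝ) 1,
        f n x * f n y * ψ (|x - y|))
      Filter.atTop
      (nhds (∫ x in Set.Icc (0:ℝ) 1, ∫ y in Set.Icc (0:ℝ) 1,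
        flim x * flim y * ψ (|x - y|))) := by
  have norm_le_one {g : ℝ → ℝ} (hg : ∀ᵐ x ∂(volume.restrict (Icc (0:ℝ) 1)), g x ∈ Icc (0:ℝ) 1) :
      ∀ᵐ x ∂(volume.restrict (Icc (0:ℝ) 1)), ‖g x‖ ≤ (1 : ℝ≥0) :=
    hg.mono fun x hx => by
      rw [Real.norm_eq_abs, NNReal.coe_one, abs_le]
      exact ⟨by linarith [hx.1], hx.2⟩
  have hconv : BoundedSetwiseTendsto (volume.restrict (Icc (0:ℝ) 1)) 1 f atTop flim :=
    { aestronglyMeasurable := fun n => (hfmeas n).aestronglyMeasurable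
      aestronglyMeasurable_lim := hflimmeas.aestronglyMeasurable
      norm_le := fun n => norm_le_one (hfbd n)
      norm_lim_le := norm_le_one hflimbd
      tendsto_setIntegral := fun s hs => by
        simpa [← Set.indicator_mul_right, integral_indicator hs] using
          hweak _ (memLp_indicator_const 2 hs (1 : ℝ) (.inr (measure_ne_top _ _))) }
  have iterated_eq_kernelEnergy {g : ℝ → ℝ} (hg : Measurable g)
      (hg_le : ∀ᵐ x ∂(volume.restrict (Icc (0:ℝ) 1)), ‖g x‖ ≤ (1 : ℝ≥0)) :
      ∫ x in Icc (0:ℝ) 1, ∫ y in Icc (0:ℝ) 1, g x * g y * ψ |x - y| =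
        kernelEnergy _ _ g g fun p => ψ |p.1 - p.2| :=
    (integral_prod _ (integrable_mul_prod_mul hg.aestronglyMeasurable hg.aestronglyMeasurable
      hg_le hg_le hK)).symm
  simp_rw [iterated_eq_kernelEnergy (hfmeas _) (hconv.norm_le _),
    iterated_eq_kernelEnergy hflimmeas hconv.norm_lim_le]
  exact hconv.tendsto_kernelEnergy hconv hK

/-- if the kernel `K(x,y) = ψ(|x-y|)` is integrable on `[0,1]²`,
`0 ≤ fₙ, f ≤ 1` a.e. with `fₙ, f ∈ L²`, and `fₙ → f` weakly in `L²([0,1])`,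
then the quadratic energies `∫∫ fₙ(x) fₙ(y) K(x,y)` converge to
`∫∫ f(x) f(y) K(x,y)`. -/
theorem stmt_7 (ψ : ℝ → ℝ) (hψmeas : Measurable ψ)
    (hK : Integrable (fun p : ℝ × ℝ => ψ (|p.1 - p.2|))
      (((volume : Measure ℝ).restrict (Set.Icc (0:ℝ) 1)).prod
        ((volume : Measure ℝ).restrict (Set.Icc (0:ℝ) 1))))
    (f : ℕ → ℝ → ℝ) (flim : ℝ → ℝ)
    (hfmeas : ∀ n, Measurable (f n)) (hflimmeas : Measurable flim)
    (hfbd : ∀ n, ∀ᵐ x ∂((volume : Measure ℝ).restrict (Set.Icc (0:ℝ) 1)),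
      f n x ∈ Set.Icc (0:ℝ) 1)
    (hflimbd : ∀ᵐ x ∂((volume : Measure ℝ).restrict (Set.Icc (0:ℝ) 1)),
      flim x ∈ Set.Icc (0:ℝ) 1)
    (hweak : ∀ g : ℝ → ℝ,
      MemLp g 2 ((volume : Measure ℝ).restrict (Set.Icc (0:ℝ) 1)) →
      Filter.Tendsto (fun n => ∫ x in Set.Icc (0:ℝ) 1, f n x * g x)
        Filter.atTop (nhds (∫ x in Set.Icc (0:ℝ) 1, flim x * g x))) :
    Filter.Tendsto
      (fun n => ∫ x in Set.Icc (0:ℝ) 1, ∫ y in Set.Icc (0:ℝ) 1,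
        f n x * f n y * ψ (|x - y|))
      Filter.atTop
      (nhds (∫ x in Set.Icc (0:ℝ) 1, ∫ y in Set.Icc (0:ℝ) 1,
        flim x * flim y * ψ (|x - y|))) :=
  stmt_7_general ψ hK f flim hfmeas hflimmeas hfbd hflimbd hweak
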